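/- Let (Ω, 𝔄, ν) be a measure space with ν a finite measure, and let u : Ω → ℝ be measurable with u(x) ≤ 0 for all x ∈ Ω. Assume that ν({x ∈ Ω : u(x) < −s}) > 0 for every s > 0. Then there exists a monotone increasing function χ₀ : (−∞, 0] → (−∞, 0] with χ₀(0) < 0 and lim_{t → −∞} χ₀(t) = −∞ such that ∫_Ω (−χ₀(u(x))) dν(x) = +∞. -/

import Mathlib

/-!
Take the step weight `χ₀ = -c n` on `(-(n+1), -n]`, with slopes `c n = (n + 1) / ν {u ≤ -n}`.
These slopes increase because the level sets shrink, and they tend to `∞` because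
`ν {u ≤ -n} ≤ ν Ω < ∞`. On `{u ≤ -n}` the integrand `-χ₀ ∘ u` is at least `c n`, so the
integral is at least `c n * ν {u ≤ -n} = n + 1` for every `n`.
-/

open Set MeasureTheory ENNReal Filter

noncomputable def stepWeight (c : ℕ → ℝ) (t : ℝ) : ℝ := -c ⌊-t⌋₊

section StepWeight

variable {c : ℕ → ℝ}

theorem monotone_stepWeight (hc : Monotone c) : Monotone (stepWeight c) := fun _ _ hst =>
  neg_le_neg (hc (Nat.floor_mono (neg_le_neg hst)))

theorem tendsto_stepWeight_atBot (hc : Tendsto c atTop atTop) :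
    Tendsto (stepWeight c) atBot atBot :=
  tendsto_neg_atTop_atBot.comp (hc.comp (tendsto_nat_floor_atTop.comp tendsto_neg_atBot_atTop))

theorem ofReal_mul_measure_le_lintegral_neg_stepWeight {Ω : Type*} [MeasurableSpace Ω]
    (ν : Measure Ω) {u : Ω → ℝ} (hu : Measurable u) (hc : Monotone c) (n : ℕ) :
    ENNReal.ofReal (c n) * ν {x | u x ≤ -n} ≤ ∫⁻ x, ENNReal.ofReal (-stepWeight c (u x)) ∂ν :=
  calc ENNReal.ofReal (c n) * ν {x | u x ≤ -n}
      = ∫⁻ x, {x | u x ≤ -n}.indicator (fun _ => ENNReal.ofReal (c n)) x ∂ν :=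
        (lintegral_indicator_const (hu measurableSet_Iic) _).symm
    _ ≤ ∫⁻ x, ENNReal.ofReal (-stepWeight c (u x)) ∂ν := by
        refine lintegral_mono (Set.indicator_le fun x hx => ?_)
        rw [stepWeight, neg_neg]
        exact ENNReal.ofReal_le_ofReal (hc (Nat.le_floor (le_neg.mp hx)))

end StepWeight

section Slopes

variable {a : ℕ → ℝ}

theorem Antitone.monotone_succ_div (ha : Antitone a) (hpos : ∀ n, 0 < a n) :
    Monotone fun n : ℕ => ((n : ℝ) + 1) / a n := fun _ _ hmn =>
  div_le_div₀ (by positivity) (by gcongr) (hpos _) (ha hmn)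

theorem Antitone.tendsto_succ_div_atTop (ha : Antitone a) (hpos : ∀ n, 0 < a n) :
    Tendsto (fun n : ℕ => ((n : ℝ) + 1) / a n) atTop atTop := by
  refine tendsto_atTop_mono (fun n => ?_)
    ((tendsto_natCast_atTop_atTop.atTop_add (tendsto_const_nhds (x := (1 : ℝ)))).atTop_div_const (hpos 0))
  exact div_le_div_of_nonneg_left (by positivity) (hpos n) (ha n.zero_le)

end Slopes

theorem exists_weight_with_infinite_energy_general
    {Ω : Type*} [MeasurableSpace Ω] (ν : Measure Ω) [IsFiniteMeasure ν]
    (u : Ω → ℝ) (hu : Measurable u)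
    (hpos : ∀ s > (0 : ℝ), 0 < ν {x | u x < -s}) :
    ∃ χ₀ : ℝ → ℝ,
      MonotoneOn χ₀ (Set.Iic 0) ∧
      (∀ t ≤ (0 : ℝ), χ₀ t ≤ 0) ∧
      χ₀ 0 < 0 ∧
      Tendsto χ₀ atBot atBot ∧
      ∫⁻ x, ENNReal.ofReal (-(χ₀ (u x))) ∂ν = ⊤ := by
  set a : ℕ → ℝ := fun n => (ν {x | u x ≤ -n}).toReal
  have ha_pos : ∀ n, 0 < a n := fun n =>
    toReal_pos ((hpos (n + 1) (by positivity)).trans_le (measure_mono fun x (hx : u x < _) =>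
      show u x ≤ -n by linarith)).ne' (measure_ne_top ν _)
  have ha_anti : Antitone a := fun m n hmn =>
    toReal_mono (measure_ne_top ν _) (measure_mono fun x (hx : u x ≤ -n) =>
      show u x ≤ -m by linarith [(Nat.cast_le (α := ℝ)).mpr hmn])
  set c : ℕ → ℝ := fun n => ((n : ℝ) + 1) / a n
  have hc_pos : ∀ n, 0 < c n := fun n => div_pos (by positivity) (ha_pos n)
  have hc_mono : Monotone c := ha_anti.monotone_succ_div ha_pos
  have energy_ge : ∀ n : ℕ, (n : ℝ≥0∞) ≤ ∫⁻ x, ENNReal.ofReal (-stepWeight c (u x)) ∂ν := fun n =>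
    calc (n : ℝ≥0∞) ≤ ENNReal.ofReal (c n * a n) := by
          rw [div_mul_cancel₀ _ (ha_pos n).ne', ← ofReal_natCast]
          exact ofReal_le_ofReal (by linarith)
      _ = ENNReal.ofReal (c n) * ν {x | u x ≤ -n} := by
          rw [ofReal_mul (hc_pos n).le, ofReal_toReal (measure_ne_top ν _)]
      _ ≤ _ := ofReal_mul_measure_le_lintegral_neg_stepWeight ν hu hc_mono n
  refine ⟨stepWeight c, (monotone_stepWeight hc_mono).monotoneOn _,
    fun t _ => neg_nonpos.mpr (hc_pos _).le, by simpa [stepWeight] using hc_pos 0,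
    tendsto_stepWeight_atBot (ha_anti.tendsto_succ_div_atTop ha_pos), ?_⟩
  by_contra h
  obtain ⟨n, hn⟩ := ENNReal.exists_nat_gt h
  exact (energy_ge n).not_gt hn

/-- Let `(Ω, 𝔄, ν)` be a finite measure space and `u : Ω → ℝ` measurable
with `u ≤ 0`, such that `ν({u < -s}) > 0` for every `s > 0`. Then there exists a monotone
increasing function `χ₀ : (-∞, 0] → (-∞, 0]` with `χ₀(0) < 0` and `χ₀(t) → -∞` as
`t → -∞`, such that `∫_Ω (-χ₀(u(x))) dν(x) = +∞`. -/
theorem exists_weight_with_infinite_energy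
    {Ω : Type*} [MeasurableSpace Ω] (ν : Measure Ω) [IsFiniteMeasure ν]
    (u : Ω → ℝ) (hu : Measurable u) (hu0 : ∀ x, u x ≤ 0)
    (hpos : ∀ s > (0 : ℝ), 0 < ν {x | u x < -s}) :
    ∃ χ₀ : ℝ → ℝ,
      MonotoneOn χ₀ (Set.Iic 0) ∧
      (∀ t ≤ (0 : ℝ), χ₀ t ≤ 0) ∧
      χ₀ 0 < 0 ∧
      Tendsto χ₀ atBot atBot ∧
      ∫⁻ x, ENNReal.ofReal (-(χ₀ (u x))) ∂ν = ⊤ :=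
  exists_weight_with_infinite_energy_general ν u hu hpos
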